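/- Let Σ be a finite nonempty alphabet, k ∈ ℕ, and let Γ ⊆ P(Σ^{[k]}) be a one-dimensional semiconstrained system. Then for all d ∈ ℕ, the internal independence entropy of Γ is at most that of its d-axial product: h_ind(Γ) ≤ h_ind(Γ^⊗d). -/

import Mathlib

open scoped BigOperators
open Filter

noncomputable section

namespace SCS

/-- Probability measures on a finite type, as normalized nonnegative functions. -/
def PM (X : Type*) [Fintype X] : Type _ :=
  {f : X → ℝ // (∀ x, 0 ≤ f x) ∧ ∑ x, f x = 1}

variable {X Y : Type*} [Fintype X] [Fintype Y]

/-- Pushforward of a finite probability measure under a map. -/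
def push [DecidableEq Y] (f : X → Y) (μ : PM X) : PM Y :=
  ⟨fun y => ∑ x ∈ Finset.univ.filter fun x => f x = y, μ.1 x,
    fun y => Finset.sum_nonneg fun x _ => μ.2.1 x,
    by rw [Finset.sum_fiberwise Finset.univ f μ.1]; exact μ.2.2⟩

/-- Total variation distance between finite probability measures. -/
def tv (μ ν : PM X) : ℝ :=
  ⨆ W : Finset X, |∑ x ∈ W, μ.1 x - ∑ x ∈ W, ν.1 x|

/-- The closed `ε`-ball around a set of measures:
`μ` is in the ball iff the infimum of TV-distances from `μ` to `Γ` is at most `ε`. -/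
def ball (Γ : Set (PM X)) (ε : ℝ) : Set (PM X) :=
  {μ | ∀ ε' > ε, ∃ ν ∈ Γ, tv μ ν < ε'}

/-- Base-2 entropy of a finite probability measure. -/
def entropy (μ : PM X) : ℝ := -∑ x, μ.1 x * Real.logb 2 (μ.1 x)

/-- The uniform measure. -/
def uniformPM (X : Type*) [Fintype X] [Nonempty X] : PM X :=
  ⟨fun _ => (Fintype.card X : ℝ)⁻¹, fun _ => by positivity, by
    have h : (Fintype.card X : ℝ) ≠ 0 := Nat.cast_ne_zero.mpr Fintype.card_ne_zero
    simp [Finset.sum_const, Finset.card_univ, nsmul_eq_mul, mul_inv_cancel₀ h]⟩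

open Classical in
/-- The uniform measure on a finset (junk value if the finset is empty). -/
def uniformOn [Nonempty X] (s : Finset X) : PM X :=
  if h : s.Nonempty then
    ⟨fun x => if x ∈ s then (s.card : ℝ)⁻¹ else 0,
      fun x => by dsimp only; split <;> positivity,
      by
        have hc : (s.card : ℝ) ≠ 0 := ne_of_gt (by exact_mod_cast Finset.card_pos.mpr h)
        rw [Finset.sum_ite_mem, Finset.univ_inter, Finset.sum_const, nsmul_eq_mul,
          mul_inv_cancel₀ hc]⟩
  else uniformPM X

/-- Convex combination of two measures. -/
def mix (t : ℝ) (h0 : 0 ≤ t) (h1 : t ≤ 1) (μ ν : PM X) : PM X :=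
  ⟨fun x => t * μ.1 x + (1 - t) * ν.1 x,
    fun x => add_nonneg (mul_nonneg h0 (μ.2.1 x)) (mul_nonneg (by linarith) (ν.2.1 x)),
    by rw [Finset.sum_add_distrib, ← Finset.mul_sum, ← Finset.mul_sum, μ.2.2, ν.2.2]; ring⟩

/-- Convexity of a set of measures. -/
def IsConvexPM (Γ : Set (PM X)) : Prop :=
  ∀ μ ∈ Γ, ∀ ν ∈ Γ, ∀ t, ∀ (h0 : 0 ≤ t) (h1 : t ≤ 1), mix t h0 h1 μ ν ∈ Γ

open Classical in
/-- Average of a finite family of measures (junk value for an empty family). -/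
def avgPM {ι : Type*} [Fintype ι] (X : Type*) [Fintype X] [Nonempty X] (f : ι → PM X) : PM X :=
  if h : Nonempty ι then
    ⟨fun x => (∑ i, (f i).1 x) / Fintype.card ι,
      fun x => div_nonneg (Finset.sum_nonneg fun i _ => (f i).2.1 x) (Nat.cast_nonneg _),
      by
        haveI := h
        have hc : (Fintype.card ι : ℝ) ≠ 0 := Nat.cast_ne_zero.mpr Fintype.card_ne_zero
        rw [← Finset.sum_div, Finset.sum_comm, Finset.sum_congr rfl fun i _ => (f i).2.2,
          Finset.sum_const, Finset.card_univ, nsmul_eq_mul, mul_one, div_self hc]⟩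
  else uniformPM X

/-- Product measure with given single-site marginals. -/
def prodPM {ι : Type*} [Fintype ι] [DecidableEq ι] {A : Type*} [Fintype A] (p : ι → PM A) :
    PM (ι → A) :=
  ⟨fun w => ∏ i, (p i).1 (w i),
    fun w => Finset.prod_nonneg fun i _ => (p i).2.1 _,
    by
      classical
      rw [show (Finset.univ : Finset (ι → A)) = Fintype.piFinset fun _ => Finset.univ from
        (Fintype.piFinset_univ).symm, ← Finset.prod_univ_sum]
      exact Finset.prod_eq_one fun i _ => (p i).2.2⟩

variable {A : Type*} [Fintype A] [DecidableEq A] [Nonempty A]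

/-- Single-site marginal of a measure on words. -/
def site {ι : Type*} [Fintype ι] [DecidableEq ι] (μ : PM (ι → A)) (i : ι) : PM A :=
  push (fun w => w i) μ

/-- A measure on words is a product (independent) measure. -/
def IsProduct {ι : Type*} [Fintype ι] [DecidableEq ι] (μ : PM (ι → A)) : Prop :=
  ∀ w, μ.1 w = ∏ i, (site μ i).1 (w i)

/-- Cyclic (mod `n`) addition of an integer vector to a point of `F_n^d`. -/
def cycAdd {d n : ℕ} (v : Fin d → Fin n) (u : Fin d → ℤ) : Fin d → Fin n := fun i =>
  ⟨(((v i : ℤ) + u i) % (n : ℤ)).toNat, by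
    have h0 : 0 < n := (v i).pos
    have h1 : (0 : ℤ) < (n : ℤ) := by exact_mod_cast h0
    have h2 := Int.emod_nonneg ((v i : ℤ) + u i) (by omega : (n : ℤ) ≠ 0)
    have h3 := Int.emod_lt_of_pos ((v i : ℤ) + u i) h1
    omega⟩

/-- The marginal of a measure on `Σ^{F_n^d}` on the coordinates `g(T) + v` (mod `n`),
viewed as a measure on `Σ^T`. -/
def margAlong {d n : ℕ} (μ : PM ((Fin d → Fin n) → A)) {T : Type*} [Fintype T] [DecidableEq T]
    (g : T → (Fin d → ℤ)) (v : Fin d → Fin n) : PM (T → A) :=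
  push (fun w t => w (cycAdd v (g t))) μ

/-- `π̂`: the average over all translates of the `g`-marginal. -/
def avgMarg {d n : ℕ} (μ : PM ((Fin d → Fin n) → A)) {T : Type*} [Fintype T] [DecidableEq T]
    (g : T → (Fin d → ℤ)) : PM (T → A) :=
  avgPM _ fun v : Fin d → Fin n => margAlong μ g v

/-- The empirical distribution of `g`-patterns in the word `w`, with positions mod `n`. -/
def empAlong {d n : ℕ} (w : (Fin d → Fin n) → A) {T : Type*} [Fintype T] [DecidableEq T]
    (g : T → (Fin d → ℤ)) : PM (T → A) := by
  by_cases h : Nonempty (Fin d → Fin n)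
  · exact push (fun v t => w (cycAdd v (g t))) (uniformPM _)
  · exact uniformPM _

open Classical in
/-- The admissible `n`-blocks of the semiconstrained system `Γ` (patterns indexed by `T`
via `g : T → ℤ^d`). -/
def blocksG {d : ℕ} {T : Type*} [Fintype T] [DecidableEq T] (g : T → (Fin d → ℤ))
    (Γ : Set (PM (T → A))) (n : ℕ) : Finset ((Fin d → Fin n) → A) :=
  Finset.univ.filter fun w => empAlong w g ∈ Γ

/-- The capacity of a semiconstrained system. -/
def xcapG {d : ℕ} {T : Type*} [Fintype T] [DecidableEq T] (g : T → (Fin d → ℤ))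
    (Γ : Set (PM (T → A))) : ℝ :=
  ⨅ ε : {e : ℝ // 0 < e},
    Filter.limsup
      (fun n : ℕ => Real.logb 2 ((blocksG g (ball Γ ε.1) n).card) / (n : ℝ) ^ d) Filter.atTop

/-- Product measures whose averaged marginal lies in `Γ`. -/
def PbarG {d : ℕ} {T : Type*} [Fintype T] [DecidableEq T] (g : T → (Fin d → ℤ))
    (Γ : Set (PM (T → A))) (n : ℕ) : Set (PM ((Fin d → Fin n) → A)) :=
  {μ | IsProduct μ ∧ avgMarg μ g ∈ Γ}

/-- The internal independence entropy. -/
def hindG {d : ℕ} {T : Type*} [Fintype T] [DecidableEq T] (g : T → (Fin d → ℤ))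
    (Γ : Set (PM (T → A))) : ℝ :=
  Filter.limsup
    (fun n : ℕ => sSup ((fun μ => entropy μ / (n : ℝ) ^ d) '' PbarG g Γ n)) Filter.atTop

/-- The independence entropy. -/
def hindBarG {d : ℕ} {T : Type*} [Fintype T] [DecidableEq T] (g : T → (Fin d → ℤ))
    (Γ : Set (PM (T → A))) : ℝ :=
  ⨅ ε : {e : ℝ // 0 < e}, hindG g (ball Γ ε.1)

/-- The point `j·e_i ∈ ℤ^d`. -/
def axialPoint {d : ℕ} (k : ℕ) (i : Fin d) (j : Fin k) : Fin d → ℤ :=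
  fun i' => if i' = i then (j : ℤ) else 0

/-- The set `S = ⋃_{i∈[d]} [k]·e_i ⊆ ℤ^d`. -/
def axialSet (d k : ℕ) : Finset (Fin d → ℤ) :=
  Finset.univ.biUnion fun i : Fin d => Finset.univ.image (axialPoint k i)

lemma axialPoint_mem {d k : ℕ} (i : Fin d) (j : Fin k) : axialPoint k i j ∈ axialSet d k :=
  Finset.mem_biUnion.mpr ⟨i, Finset.mem_univ _, Finset.mem_image_of_mem _ (Finset.mem_univ _)⟩

/-- The inclusion of `S = ⋃_i [k]e_i` into `ℤ^d`. -/
def valS (d k : ℕ) : {v // v ∈ axialSet d k} → (Fin d → ℤ) := Subtype.val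

/-- Identification of `Σ^{[k]e_i}` with `Σ^{[k]}`: restriction of a configuration on `S`
to the `i`-th axis. -/
def axialRestr {d k : ℕ} (i : Fin d) (x : {v // v ∈ axialSet d k} → A) : Fin k → A :=
  fun j => x ⟨axialPoint k i j, axialPoint_mem i j⟩

/-- The `d`-axial product of a one-dimensional SCS, as a set of measures on `Σ^S`. -/
def axialProdS {k : ℕ} (d : ℕ) (Γ : Set (PM (Fin k → A))) :
    Set (PM ({v // v ∈ axialSet d k} → A)) :=
  {μ | ∀ i : Fin d, push (axialRestr i) μ ∈ Γ}

/-- The embedding `[k] → ℤ^1`. -/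
def oneG (k : ℕ) : Fin k → (Fin 1 → ℤ) := fun j _ => (j : ℤ)

/-- The embedding `F_k^d → ℤ^d`. -/
def cubeG (d k : ℕ) : (Fin d → Fin k) → (Fin d → ℤ) := fun u i => (u i : ℤ)

/-- Identification of `Σ^{[k]e_i}` with `Σ^{[k]}` inside `Σ^{F_k^d}`. -/
def cubeRestr {d k : ℕ} (i : Fin d) (x : (Fin d → Fin k) → A) : Fin k → A :=
  fun j => x fun i' => if i' = i then j else ⟨0, j.pos⟩

/-- The `d`-axial product of a one-dimensional SCS, viewed inside `P(Σ^{F_k^d})`. -/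
def axialProdC {k : ℕ} (d : ℕ) (Γ : Set (PM (Fin k → A))) :
    Set (PM ((Fin d → Fin k) → A)) :=
  {μ | ∀ i : Fin d, push (cubeRestr i) μ ∈ Γ}

/-- The weak `d`-axial product of a one-dimensional SCS, viewed inside `P(Σ^{F_k^d})`. -/
def weakAxialC {k : ℕ} (d : ℕ) (Γ : Set (PM (Fin k → A))) :
    Set (PM ((Fin d → Fin k) → A)) :=
  {μ | avgPM _ (fun i : Fin d => push (cubeRestr i) μ) ∈ Γ}

/-- `P̃_n(Γ^⊠d)`: product measures whose direction-averaged `[k]`-marginal lies in `Γ`. -/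
def PtildeG {k : ℕ} (d : ℕ) (Γ : Set (PM (Fin k → A))) (n : ℕ) :
    Set (PM ((Fin d → Fin n) → A)) :=
  {μ | IsProduct μ ∧ avgPM _ (fun i : Fin d => avgMarg μ (axialPoint k i)) ∈ Γ}

/-- `h̃_ind(Γ^⊠d)`, the relaxed independence entropy of the weak axial product. -/
def htildeG {k : ℕ} (d : ℕ) (Γ : Set (PM (Fin k → A))) : ℝ :=
  ⨅ ε : {e : ℝ // 0 < e},
    Filter.limsup
      (fun n : ℕ => sSup ((fun μ => entropy μ / (n : ℝ) ^ d) '' PtildeG d (ball Γ ε.1) n))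
      Filter.atTop

open Classical in
/-- `B_n(Γ^⊗d)`: the admissible blocks of the `d`-axial product. -/
def axialBlocks {k : ℕ} (Γ : Set (PM (Fin k → A))) (d n : ℕ) :
    Finset ((Fin d → Fin n) → A) :=
  Finset.univ.filter fun w => ∀ i : Fin d, empAlong w (axialPoint k i) ∈ Γ

/-- `μ_{y,A}`: the uniform measure on the admissible blocks agreeing with `y` on `A'`. -/
def muYA {k : ℕ} (Γ : Set (PM (Fin k → A))) (d n : ℕ) (A' : Finset (Fin d → Fin n))
    (y : (Fin d → Fin n) → A) : PM ((Fin d → Fin n) → A) :=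
  uniformOn ((axialBlocks Γ d n).filter fun x => ∀ v ∈ A', x v = y v)

/-- `η_{y,A}`: the product of the single-site marginals of `μ_{y,A}`. -/
def etaYA {k : ℕ} (Γ : Set (PM (Fin k → A))) (d n : ℕ) (A' : Finset (Fin d → Fin n))
    (y : (Fin d → Fin n) → A) : PM ((Fin d → Fin n) → A) :=
  prodPM fun v => site (muYA Γ d n A' y) v

open Classical in
/-- The probability of an event. -/
def probOf (P : PM X) (E : Set X) : ℝ := ∑ x, if x ∈ E then P.1 x else 0

/-- Expectation of a real function. -/
def expect (P : PM X) (F : X → ℝ) : ℝ := ∑ x, P.1 x * F x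

open Classical in
/-- Conditional measure given an event (junk value `P` itself for null events). -/
def condPM (P : PM X) (E : Set X) : PM X :=
  if h : 0 < probOf P E then
    ⟨fun x => (if x ∈ E then P.1 x else 0) / probOf P E,
      fun x => div_nonneg (by by_cases hx : x ∈ E <;> simp [hx] <;> exact P.2.1 x) (le_of_lt h),
      by rw [← Finset.sum_div]; rw [show (∑ x, if x ∈ E then P.1 x else 0) = probOf P E from rfl];
         exact div_self (ne_of_gt h)⟩
  else P

/-- `[−j]e_i + v = {v − e_i, …, v − j·e_i}` (coordinates mod `n`). -/
def segNeg {d n : ℕ} (i : Fin d) (v : Fin d → Fin n) (j : ℕ) : Finset (Fin d → Fin n) :=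
  (Finset.range j).image fun l : ℕ => cycAdd v fun i' => if i' = i then -((l : ℤ) + 1) else 0


open Fin.NatCast

section Aux

variable {X Y Z : Type*} [Fintype X] [Fintype Y] [Fintype Z]

lemma PM.ext' {μ ν : PM X} (h : ∀ x, μ.1 x = ν.1 x) : μ = ν := Subtype.ext (funext h)

lemma push_apply' [DecidableEq Y] (f : X → Y) (μ : PM X) (y : Y) :
    (push f μ).1 y = ∑ x, if f x = y then μ.1 x else 0 := by
  rw [show (push f μ).1 y = ∑ x ∈ Finset.univ.filter fun x => f x = y, μ.1 x from rfl,
    Finset.sum_filter]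

lemma push_push [DecidableEq Y] [DecidableEq Z] (f : X → Y) (g : Y → Z) (μ : PM X) :
    push g (push f μ) = push (g ∘ f) μ := by
  apply PM.ext'; intro z
  rw [push_apply' g _ z, push_apply' (g ∘ f) μ z]
  have h1 : ∀ y, (if g y = z then (push f μ).1 y else 0)
      = ∑ x, if f x = y then (if g y = z then μ.1 x else 0) else 0 := by
    intro y
    by_cases h : g y = z
    · simp only [h, if_true, push_apply']
    · simp [h]
  rw [Finset.sum_congr rfl fun y _ => h1 y, Finset.sum_comm]
  refine Finset.sum_congr rfl fun x _ => ?_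
  rw [Finset.sum_ite_eq]
  simp [Function.comp]

lemma avgPM_apply {ι : Type*} [Fintype ι] [Nonempty ι] [Nonempty X] (F : ι → PM X) (x : X) :
    (avgPM X F).1 x = (∑ i, (F i).1 x) / (Fintype.card ι : ℝ) := by
  rw [avgPM]
  exact congrFun (congrArg Subtype.val (dif_pos (inferInstance : Nonempty ι))) x

lemma push_avgPM {ι : Type*} [Fintype ι] [Nonempty ι] [DecidableEq Y] [Nonempty X] [Nonempty Y]
    (f : X → Y) (F : ι → PM X) :
    push f (avgPM X F) = avgPM Y fun i => push f (F i) := by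
  apply PM.ext'; intro y
  rw [push_apply', avgPM_apply]
  have h1 : ∀ x, (if f x = y then (avgPM X F).1 x else 0)
      = (∑ i, if f x = y then (F i).1 x else 0) / (Fintype.card ι : ℝ) := by
    intro x
    by_cases h : f x = y
    · simp only [h, if_true, avgPM_apply]
    · simp [h]
  rw [Finset.sum_congr rfl fun x _ => h1 x, ← Finset.sum_div, Finset.sum_comm]
  congr 1
  exact Finset.sum_congr rfl fun i _ => (push_apply' f (F i) y).symm

lemma sum_prod_eq {ι B : Type*} [Fintype ι] [DecidableEq ι] [Fintype B] [DecidableEq B]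
    (f : ι → B → ℝ) : ∑ w : ι → B, ∏ i, f i (w i) = ∏ i, ∑ a, f i a := by
  rw [Finset.prod_univ_sum, Fintype.piFinset_univ]

lemma prodPM_apply {ι : Type*} [Fintype ι] [DecidableEq ι] {B : Type*} [Fintype B]
    (p : ι → PM B) (w : ι → B) : (prodPM p).1 w = ∏ i, (p i).1 (w i) := rfl

lemma push_prodPM {ι T : Type*} [Fintype ι] [DecidableEq ι] [Fintype T] [DecidableEq T]
    {B : Type*} [Fintype B] [DecidableEq B]
    (p : ι → PM B) (f : T → ι) (hf : Function.Injective f) :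
    push (fun w t => w (f t)) (prodPM p) = prodPM fun t => p (f t) := by
  apply PM.ext'; intro x
  rw [push_apply']
  have key : ∀ w : ι → B,
      (if (fun t => w (f t)) = x then (prodPM p).1 w else 0)
      = ∏ j, (if ∀ t, f t = j → x t = w j then (p j).1 (w j) else 0) := by
    intro w
    by_cases h : (fun t => w (f t)) = x
    · rw [if_pos h, prodPM_apply]
      refine Finset.prod_congr rfl fun j _ => ?_
      rw [if_pos]
      intro t ht
      subst ht
      exact (congrFun h t).symm
    · rw [if_neg h]
      have hex : ∃ t, w (f t) ≠ x t := by
        by_contra hc; push_neg at hc; exact h (funext hc)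
      obtain ⟨t, ht⟩ := hex
      refine (Finset.prod_eq_zero (Finset.mem_univ (f t)) ?_).symm
      rw [if_neg]
      intro H
      exact ht (H t rfl).symm
  calc (∑ w : ι → B, if (fun t => w (f t)) = x then (prodPM p).1 w else 0)
      = ∑ w : ι → B, ∏ j, (if ∀ t, f t = j → x t = w j then (p j).1 (w j) else 0) :=
        Finset.sum_congr rfl fun w _ => key w
    _ = ∏ j, ∑ b, (if ∀ t, f t = j → x t = b then (p j).1 b else 0) :=
        sum_prod_eq fun j b => if ∀ t, f t = j → x t = b then (p j).1 b else 0
    _ = (prodPM fun t => p (f t)).1 x := by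
        have h2 : ∀ j ∉ Finset.univ.image f,
            (∑ b, if ∀ t, f t = j → x t = b then (p j).1 b else 0) = 1 := by
          intro j hj
          have hall : ∀ b : B, (if ∀ t, f t = j → x t = b then (p j).1 b else 0) = (p j).1 b := by
            intro b
            rw [if_pos]
            intro t ht
            exact absurd (ht ▸ Finset.mem_image_of_mem f (Finset.mem_univ t)) hj
          rw [Finset.sum_congr rfl fun b _ => hall b]
          exact (p j).2.2
        rw [← Finset.prod_subset (Finset.subset_univ (Finset.univ.image f))
          (fun j _ hj => h2 j hj)]
        rw [Finset.prod_image (fun t _ t' _ h => hf h), prodPM_apply]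
        refine Finset.prod_congr rfl fun t _ => ?_
        have hall : ∀ b : B, (if ∀ t', f t' = f t → x t' = b then (p (f t)).1 b else 0)
            = (if b = x t then (p (f t)).1 b else 0) := by
          intro b
          by_cases hb : b = x t
          · rw [if_pos hb, if_pos]
            intro t' ht'
            rw [hf ht', hb]
          · rw [if_neg hb, if_neg]
            intro H
            exact hb (H t rfl).symm
        rw [Finset.sum_congr rfl fun b _ => hall b, Finset.sum_ite_eq' Finset.univ (x t)]
        simp

lemma site_prodPM {ι : Type*} [Fintype ι] [DecidableEq ι] {B : Type*} [Fintype B]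
    [DecidableEq B] [Nonempty B] (p : ι → PM B) (i : ι) : site (prodPM p) i = p i := by
  apply PM.ext'; intro a
  rw [site, push_apply']
  have key : ∀ w : ι → B, (if w i = a then (prodPM p).1 w else 0)
      = ∏ j, (if j = i then (if w j = a then (p j).1 (w j) else 0) else (p j).1 (w j)) := by
    intro w
    by_cases h : w i = a
    · rw [if_pos h, prodPM_apply]
      refine Finset.prod_congr rfl fun j _ => ?_
      by_cases hj : j = i
      · subst hj; rw [if_pos rfl, if_pos h]
      · rw [if_neg hj]
    · rw [if_neg h]
      refine (Finset.prod_eq_zero (Finset.mem_univ i) ?_).symm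
      rw [if_pos rfl, if_neg h]
  calc (∑ w : ι → B, if w i = a then (prodPM p).1 w else 0)
      = ∑ w : ι → B, ∏ j, (if j = i then (if w j = a then (p j).1 (w j) else 0)
          else (p j).1 (w j)) := Finset.sum_congr rfl fun w _ => key w
    _ = ∏ j, ∑ b, (if j = i then (if b = a then (p j).1 b else 0) else (p j).1 b) :=
        sum_prod_eq fun j b => if j = i then (if b = a then (p j).1 b else 0) else (p j).1 b
    _ = (p i).1 a := by
        rw [Fintype.prod_eq_single i (fun j hj => ?_)]
        · rw [Finset.sum_congr rfl fun b _ => if_pos rfl, Finset.sum_ite_eq' Finset.univ a]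
          simp
        · rw [Finset.sum_congr rfl fun b _ => if_neg hj]
          exact (p j).2.2

lemma isProduct_prodPM {ι : Type*} [Fintype ι] [DecidableEq ι] {B : Type*} [Fintype B]
    [DecidableEq B] [Nonempty B] (p : ι → PM B) : IsProduct (prodPM p) := by
  intro w
  rw [prodPM_apply]
  exact Finset.prod_congr rfl fun i _ => by rw [site_prodPM]

lemma eq_prodPM_site {ι : Type*} [Fintype ι] [DecidableEq ι] {B : Type*} [Fintype B]
    [DecidableEq B] [Nonempty B] {μ : PM (ι → B)} (h : IsProduct μ) :
    μ = prodPM fun i => site μ i := PM.ext' h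

lemma entropy_prodPM {ι : Type*} [Fintype ι] [DecidableEq ι] {B : Type*} [Fintype B]
    [DecidableEq B] (p : ι → PM B) : entropy (prodPM p) = ∑ i, entropy (p i) := by
  have hlog : ∀ w : ι → B, (prodPM p).1 w * Real.logb 2 ((prodPM p).1 w)
      = ∑ j, (prodPM p).1 w * Real.logb 2 ((p j).1 (w j)) := by
    intro w
    by_cases h : ∃ j, (p j).1 (w j) = 0
    · obtain ⟨j, hj⟩ := h
      have h0 : (prodPM p).1 w = 0 := Finset.prod_eq_zero (Finset.mem_univ j) hj
      rw [h0]; simp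
    · push_neg at h
      rw [prodPM_apply, Real.logb_prod _ _ (fun i _ => h i), Finset.mul_sum]
  have hmid : ∀ j, (∑ w : ι → B, (prodPM p).1 w * Real.logb 2 ((p j).1 (w j)))
      = ∑ b, (p j).1 b * Real.logb 2 ((p j).1 b) := by
    intro j
    have hw : ∀ w : ι → B, (prodPM p).1 w * Real.logb 2 ((p j).1 (w j))
        = ∏ i, (if i = j then (p i).1 (w i) * Real.logb 2 ((p i).1 (w i))
            else (p i).1 (w i)) := by
      intro w
      rw [prodPM_apply,
        ← Finset.prod_erase_mul Finset.univ _ (Finset.mem_univ j),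
        ← Finset.prod_erase_mul Finset.univ
          (fun i => if i = j then (p i).1 (w i) * Real.logb 2 ((p i).1 (w i))
            else (p i).1 (w i)) (Finset.mem_univ j)]
      rw [if_pos rfl]
      rw [Finset.prod_congr rfl fun i hi => if_neg (Finset.ne_of_mem_erase hi)]
      ring
    rw [Finset.sum_congr rfl fun w _ => hw w,
      sum_prod_eq fun i b => if i = j then (p i).1 b * Real.logb 2 ((p i).1 b) else (p i).1 b,
      Fintype.prod_eq_single j (fun i hi => ?_)]
    · rw [Finset.sum_congr rfl fun b _ => if_pos rfl]
    · rw [Finset.sum_congr rfl fun b _ => if_neg hi]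
      exact (p i).2.2
  rw [entropy, Finset.sum_congr rfl fun w _ => hlog w, Finset.sum_comm,
    Finset.sum_congr rfl fun j (_ : j ∈ Finset.univ) => hmid j]
  simp only [entropy]
  exact (Finset.sum_neg_distrib _).symm

lemma PM.le_one (μ : PM X) (x : X) : μ.1 x ≤ 1 :=
  le_trans (Finset.single_le_sum (fun i _ => μ.2.1 i) (Finset.mem_univ x)) (le_of_eq μ.2.2)

lemma PM.nonempty (μ : PM X) : Nonempty X := by
  by_contra h
  haveI := not_nonempty_iff.mp h
  have h2 := μ.2.2
  simp only [Finset.univ_eq_empty, Finset.sum_empty] at h2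
  norm_num at h2

lemma entropy_nonneg (μ : PM X) : 0 ≤ entropy μ := by
  rw [entropy, neg_nonneg]
  refine Finset.sum_nonpos fun x _ => mul_nonpos_iff.mpr (Or.inl ?_)
  exact ⟨μ.2.1 x, Real.logb_nonpos one_lt_two (μ.2.1 x) (PM.le_one μ x)⟩

lemma entropy_le_logb_card (μ : PM X) : entropy μ ≤ Real.logb 2 (Fintype.card X) := by
  haveI := PM.nonempty μ
  set c : ℝ := (Fintype.card X : ℝ) with hc
  have hc0 : 0 < c := by rw [hc]; exact_mod_cast Fintype.card_pos
  have hterm : ∀ x, μ.1 x - 1 / c ≤ μ.1 x * Real.log (c * μ.1 x) := by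
    intro x
    rcases (μ.2.1 x).eq_or_lt with h | h
    · rw [← h, zero_mul, zero_sub, neg_nonpos]
      positivity
    · have hcp : 0 < c * μ.1 x := by positivity
      have h1 : 1 - (c * μ.1 x)⁻¹ ≤ Real.log (c * μ.1 x) :=
        Real.one_sub_inv_le_log_of_pos hcp
      have h2 : μ.1 x * (c * μ.1 x)⁻¹ = 1 / c := by
        field_simp
      nlinarith
  have hsum : 0 ≤ ∑ x, μ.1 x * Real.log (c * μ.1 x) := by
    have hle := Finset.sum_le_sum fun x (_ : x ∈ Finset.univ) => hterm x
    have he : ∑ x : X, (μ.1 x - 1 / c) = 0 := by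
      rw [Finset.sum_sub_distrib, μ.2.2, Finset.sum_const, Finset.card_univ, nsmul_eq_mul]
      rw [hc] at hc0 ⊢
      field_simp
      norm_num
    linarith
  have hkey : ∑ x, μ.1 x * Real.logb 2 (c * μ.1 x) = Real.logb 2 c - entropy μ := by
    have h3 : ∀ x, μ.1 x * Real.logb 2 (c * μ.1 x)
        = μ.1 x * Real.logb 2 c + μ.1 x * Real.logb 2 (μ.1 x) := by
      intro x
      rcases (μ.2.1 x).eq_or_lt with h | h
      · rw [← h]; ring
      · rw [Real.logb_mul (ne_of_gt hc0) (ne_of_gt h)]; ring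
    rw [Finset.sum_congr rfl fun x _ => h3 x, Finset.sum_add_distrib, ← Finset.sum_mul,
      μ.2.2, one_mul, entropy]
    ring
  have hlogb : 0 ≤ ∑ x, μ.1 x * Real.logb 2 (c * μ.1 x) := by
    have heq : ∑ x, μ.1 x * Real.logb 2 (c * μ.1 x)
        = (∑ x, μ.1 x * Real.log (c * μ.1 x)) / Real.log 2 := by
      rw [Finset.sum_div]
      refine Finset.sum_congr rfl fun x _ => ?_
      rw [Real.logb]; ring
    rw [heq]
    exact div_nonneg hsum (Real.log_nonneg one_le_two)
  linarith [hkey ▸ hlogb]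

lemma entropy_uniformPM [Nonempty X] :
    entropy (uniformPM X) = Real.logb 2 (Fintype.card X) := by
  have hc : (0:ℝ) < (Fintype.card X : ℝ) := by exact_mod_cast Fintype.card_pos
  rw [entropy]
  have hx : ∀ x : X, (uniformPM X).1 x * Real.logb 2 ((uniformPM X).1 x)
      = (Fintype.card X : ℝ)⁻¹ * Real.logb 2 ((Fintype.card X : ℝ)⁻¹) := fun x => rfl
  rw [Finset.sum_congr rfl fun x _ => hx x, Finset.sum_const, Finset.card_univ, nsmul_eq_mul,
    Real.logb_inv]
  field_simp

lemma isProduct_of_unique {ι : Type*} [Fintype ι] [DecidableEq ι] [Unique ι]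
    {B : Type*} [Fintype B] [DecidableEq B] [Nonempty B] (μ : PM (ι → B)) : IsProduct μ := by
  intro w
  rw [Fintype.prod_unique fun i => (site μ i).1 (w i)]
  rw [site, push_apply']
  have h1 : ∀ w' : ι → B, (if w' default = w default then μ.1 w' else 0)
      = if w' = w then μ.1 w' else 0 := by
    intro w'
    refine if_congr ?_ rfl rfl
    constructor
    · intro h; funext i
      rw [Unique.eq_default i]
      exact h
    · intro h; rw [h]
  rw [Finset.sum_congr rfl fun w' _ => h1 w', Finset.sum_ite_eq' Finset.univ w]
  simp

lemma cycAdd_nat {d n : ℕ} [NeZero n] (v : Fin d → Fin n) (u : Fin d → ℤ) (w : Fin d → ℕ)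
    (h : ∀ i, u i = (w i : ℤ)) : cycAdd v u = fun i => v i + ((w i : ℕ) : Fin n) := by
  funext i
  apply Fin.ext
  have hn : 0 < n := Nat.pos_of_ne_zero (NeZero.ne n)
  have h1 : (v i + ((w i : ℕ) : Fin n)).val = ((v i).val + ((w i : ℕ) : Fin n).val) % n :=
    Fin.val_add _ _
  have h2 : (((w i : ℕ) : Fin n)).val = (w i) % n := Fin.val_natCast _ _
  show (((v i : ℤ) + u i) % (n : ℤ)).toNat = _
  rw [h1, h2, h i, Nat.add_mod_mod]
  rw [show ((v i : ℤ) + ((w i : ℕ) : ℤ)) = (((v i : Fin n).val + w i : ℕ) : ℤ) by push_cast; ring]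
  rw [← Int.natCast_mod]
  exact Int.toNat_natCast _

lemma sum_comp_card {ι κ : Type*} [Fintype ι] [Fintype κ] [DecidableEq κ] [Nonempty κ]
    (S : ι → κ)
    (hfib : ∀ m m' : κ, (Finset.univ.filter fun v => S v = m).card
      = (Finset.univ.filter fun v => S v = m').card) (G : κ → ℝ) :
    (∑ v, G (S v)) * (Fintype.card κ : ℝ) = (Fintype.card ι : ℝ) * ∑ m, G m := by
  obtain ⟨m₀⟩ := (inferInstance : Nonempty κ)
  set c := (Finset.univ.filter fun v => S v = m₀).card with hcdef
  have h1 : ∑ v, G (S v) = (c : ℝ) * ∑ m, G m := by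
    rw [← Finset.sum_fiberwise' Finset.univ S G, Finset.mul_sum]
    refine Finset.sum_congr rfl fun m _ => ?_
    rw [Finset.sum_const, hfib m m₀, nsmul_eq_mul, hcdef]
  have h2 : Fintype.card ι = c * Fintype.card κ := by
    rw [← Finset.card_univ,
      Finset.card_eq_sum_card_fiberwise (f := S) (t := Finset.univ) (fun x _ => Finset.mem_univ _)]
    rw [Finset.sum_congr rfl fun m (_ : m ∈ Finset.univ) => hfib m m₀]
    rw [Finset.sum_const, Finset.card_univ, smul_eq_mul, mul_comm]
  rw [h1, h2]
  push_cast
  ring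

lemma avg_comp {ι κ : Type*} [Fintype ι] [Fintype κ] [DecidableEq κ] [Nonempty ι] [Nonempty κ]
    [Nonempty X] (S : ι → κ)
    (hfib : ∀ m m' : κ, (Finset.univ.filter fun v => S v = m).card
      = (Finset.univ.filter fun v => S v = m').card) (F : κ → PM X) :
    avgPM X (fun v => F (S v)) = avgPM X F := by
  apply PM.ext'; intro x
  have hι : (0:ℝ) < Fintype.card ι := by exact_mod_cast Fintype.card_pos
  have hκ : (0:ℝ) < Fintype.card κ := by exact_mod_cast Fintype.card_pos
  rw [avgPM_apply, avgPM_apply, div_eq_div_iff (ne_of_gt hι) (ne_of_gt hκ)]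
  have h3 := sum_comp_card S hfib fun m => (F m).1 x
  linarith

lemma sum_update {d n : ℕ} [NeZero n] (v : Fin d → Fin n) (i₀ : Fin d) (x : Fin n) :
    ∑ i, Function.update v i₀ x i = x + ∑ i ∈ Finset.univ.erase i₀, v i := by
  rw [← Finset.add_sum_erase _ _ (Finset.mem_univ i₀), Function.update_self]
  congr 1
  exact Finset.sum_congr rfl fun i hi => Function.update_of_ne (Finset.ne_of_mem_erase hi) _ _

lemma fiber_card {d n : ℕ} [NeZero n] (hd : 0 < d) (m m' : Fin n) :
    (Finset.univ.filter fun v : Fin d → Fin n => (∑ i, v i) = m).card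
      = (Finset.univ.filter fun v : Fin d → Fin n => (∑ i, v i) = m').card := by
  set i₀ : Fin d := ⟨0, hd⟩ with hi₀
  have hmem : ∀ (a b : Fin n) (v : Fin d → Fin n),
      (∑ i, v i) = a → (∑ i, Function.update v i₀ (v i₀ + (b - a)) i) = b := by
    intro a b v hv
    rw [sum_update]
    have h2 : v i₀ + ∑ i ∈ Finset.univ.erase i₀, v i = a := by
      rw [Finset.add_sum_erase _ _ (Finset.mem_univ i₀)]
      exact hv
    calc v i₀ + (b - a) + ∑ i ∈ Finset.univ.erase i₀, v i
        = (v i₀ + ∑ i ∈ Finset.univ.erase i₀, v i) + (b - a) := by abel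
      _ = a + (b - a) := by rw [h2]
      _ = b := by abel
  have hinv : ∀ (a b : Fin n) (v : Fin d → Fin n),
      Function.update (Function.update v i₀ (v i₀ + (b - a))) i₀
        ((Function.update v i₀ (v i₀ + (b - a))) i₀ + (a - b)) = v := by
    intro a b v
    rw [Function.update_self, Function.update_idem]
    rw [show v i₀ + (b - a) + (a - b) = v i₀ by abel]
    exact Function.update_eq_self i₀ v
  refine Finset.card_bij' (fun v _ => Function.update v i₀ (v i₀ + (m' - m)))
    (fun v _ => Function.update v i₀ (v i₀ + (m - m'))) ?_ ?_ ?_ ?_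
  · intro v hv
    rw [Finset.mem_filter] at hv ⊢
    exact ⟨Finset.mem_univ _, hmem m m' v hv.2⟩
  · intro v hv
    rw [Finset.mem_filter] at hv ⊢
    exact ⟨Finset.mem_univ _, hmem m' m v hv.2⟩
  · intro v _
    exact hinv m m' v
  · intro v _
    exact hinv m' m v

end Aux

/-- The internal independence entropy of a one-dimensional SCS is at most
that of its `d`-axial product. -/
theorem hind_le_hind_axialProd {A : Type} [Fintype A] [DecidableEq A] [Nonempty A]
    (k : ℕ) (Γ : Set (PM (Fin k → A))) (d : ℕ) :
    hindG (oneG k) Γ ≤ hindG (valS d k) (axialProdS d Γ) := by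
  classical
  have hA1 : (1:ℝ) ≤ (Fintype.card A : ℝ) := by exact_mod_cast Fintype.card_pos
  set C := Real.logb 2 (Fintype.card A) with hCdef
  have hC : 0 ≤ C := Real.logb_nonneg one_lt_two hA1
  have hEnt : ∀ (d' n : ℕ), 1 ≤ n → ∀ μ : PM ((Fin d' → Fin n) → A),
      entropy μ / (n:ℝ)^d' ≤ C := by
    intro d' n hn μ
    have hnr : (0:ℝ) < (n:ℝ) := by exact_mod_cast hn
    have hcard : Fintype.card ((Fin d' → Fin n) → A) = Fintype.card A ^ (n ^ d') := by
      simp [Fintype.card_fun]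
    have h1 := entropy_le_logb_card μ
    rw [hcard] at h1
    rw [show ((Fintype.card A ^ (n ^ d') : ℕ) : ℝ) = (Fintype.card A : ℝ) ^ (n ^ d') by
      push_cast; ring] at h1
    rw [Real.logb_pow] at h1
    rw [div_le_iff₀ (pow_pos hnr d')]
    calc entropy μ ≤ ((n ^ d' : ℕ) : ℝ) * C := h1
      _ = C * (n:ℝ)^d' := by push_cast; ring
  have hann : ∀ n : ℕ, 0 ≤ sSup ((fun μ => entropy μ / (n:ℝ)^1) '' PbarG (oneG k) Γ n) := by
    intro n
    refine Real.sSup_nonneg ?_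
    rintro x ⟨μ, hμ, rfl⟩
    exact div_nonneg (entropy_nonneg μ) (by positivity)
  have hbub : ∀ n : ℕ, 1 ≤ n →
      sSup ((fun μ => entropy μ / (n:ℝ)^d) '' PbarG (valS d k) (axialProdS d Γ) n) ≤ C := by
    intro n hn
    refine Real.sSup_le ?_ hC
    rintro x ⟨μ, hμ, rfl⟩
    exact hEnt d n hn μ
  have key : ∀ n : ℕ, max k 1 ≤ n →
      sSup ((fun μ => entropy μ / (n:ℝ)^1) '' PbarG (oneG k) Γ n)
        ≤ sSup ((fun μ => entropy μ / (n:ℝ)^d) '' PbarG (valS d k) (axialProdS d Γ) n) := by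
    intro n hn
    have hk : k ≤ n := le_trans (le_max_left _ _) hn
    have hn1 : 1 ≤ n := le_trans (le_max_right _ _) hn
    haveI : NeZero n := ⟨by omega⟩
    have hnpos : (0:ℝ) < n := by exact_mod_cast hn1
    have hbdd : BddAbove ((fun μ => entropy μ / (n:ℝ)^d) ''
        PbarG (valS d k) (axialProdS d Γ) n) := by
      refine ⟨C, ?_⟩
      rintro x ⟨μ, hμ, rfl⟩
      exact hEnt d n hn1 μ
    have hbnn : 0 ≤ sSup ((fun μ => entropy μ / (n:ℝ)^d) ''
        PbarG (valS d k) (axialProdS d Γ) n) := by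
      refine Real.sSup_nonneg ?_
      rintro x ⟨μ, hμ, rfl⟩
      exact div_nonneg (entropy_nonneg μ) (by positivity)
    refine Real.sSup_le ?_ hbnn
    rintro x ⟨μ, hμ, rfl⟩
    rcases Nat.eq_zero_or_pos d with hd | hd
    · subst hd
      have hmem : uniformPM ((Fin 0 → Fin n) → A) ∈ PbarG (valS 0 k) (axialProdS 0 Γ) n :=
        ⟨isProduct_of_unique _, fun i => i.elim0⟩
      have hval : entropy (uniformPM ((Fin 0 → Fin n) → A)) / (n:ℝ)^(0:ℕ) = C := by
        rw [pow_zero, div_one, entropy_uniformPM]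
        congr 2
        simp [Fintype.card_fun]
      calc entropy μ / (n:ℝ)^1 ≤ C := hEnt 1 n hn1 μ
        _ = entropy (uniformPM ((Fin 0 → Fin n) → A)) / (n:ℝ)^(0:ℕ) := hval.symm
        _ ≤ _ := le_csSup hbdd ⟨_, hmem, rfl⟩
    · haveI : Nonempty (Fin n) := ⟨⟨0, by omega⟩⟩
      haveI : Nonempty (Fin d → Fin n) := ⟨fun _ => ⟨0, by omega⟩⟩
      obtain ⟨hprod, hmarg⟩ := hμ
      set q : Fin n → PM A := fun m => site μ (fun _ : Fin 1 => m) with hq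
      set p : (Fin d → Fin n) → PM A := fun v => q (∑ i, v i) with hp
      have hμeq : μ = prodPM fun u => site μ u := eq_prodPM_site hprod
      have hsite : ∀ u : Fin 1 → Fin n, site μ u = q (u 0) := by
        intro u
        rw [hq]
        congr 1
        funext i
        have h0 : i = (0 : Fin 1) := by
          apply Fin.ext
          have := i.isLt
          omega
        rw [h0]
      have hfib : ∀ m m' : Fin n,
          (Finset.univ.filter fun v : Fin d → Fin n => (∑ i, v i) = m).card
          = (Finset.univ.filter fun v : Fin d → Fin n => (∑ i, v i) = m').card :=
        fiber_card hd
      have hcastinj : ∀ j j' : Fin k, (((j : Fin k) : ℕ) : Fin n) = (((j' : Fin k) : ℕ) : Fin n) → j = j' := by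
        intro j j' h
        have h2 := congrArg Fin.val h
        rw [Fin.val_natCast, Fin.val_natCast] at h2
        have hj := j.isLt
        have hj' := j'.isLt
        rw [Nat.mod_eq_of_lt (by omega), Nat.mod_eq_of_lt (by omega)] at h2
        exact Fin.ext h2
      have hax : ∀ (v : Fin d → Fin n) (i : Fin d) (j : Fin k),
          cycAdd v (axialPoint k i j)
            = fun i' => v i' + (((if i' = i then ((j : Fin k) : ℕ) else 0 : ℕ)) : Fin n) := by
        intro v i j
        refine cycAdd_nat v _ (fun i' => if i' = i then ((j : Fin k) : ℕ) else 0) ?_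
        intro i'
        rw [axialPoint]
        split <;> rename_i hcase <;> simp [hcase]
      have hone : ∀ (m : Fin n) (j : Fin k),
          cycAdd (fun _ : Fin 1 => m) (oneG k j)
            = fun _ : Fin 1 => m + (((j : Fin k) : ℕ) : Fin n) := by
        intro m j
        rw [cycAdd_nat (fun _ : Fin 1 => m) (oneG k j) (fun _ => ((j : Fin k) : ℕ))
          (fun i' => rfl)]
      have hsax : ∀ (v : Fin d → Fin n) (i : Fin d) (j : Fin k),
          (∑ i', (v i' + (((if i' = i then ((j : Fin k) : ℕ) else 0 : ℕ)) : Fin n)))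
            = (∑ i', v i') + (((j : Fin k) : ℕ) : Fin n) := by
        intro v i j
        rw [Finset.sum_add_distrib]
        congr 1
        rw [Finset.sum_congr rfl fun i' (_ : i' ∈ Finset.univ) =>
          show (((if i' = i then ((j : Fin k) : ℕ) else 0 : ℕ)) : Fin n)
            = if i' = i then (((j : Fin k) : ℕ) : Fin n) else 0 by split <;> simp]
        rw [Finset.sum_ite_eq' Finset.univ i]
        simp
      have hstep : ∀ (v : Fin d → Fin n) (i : Fin d),
          push (axialRestr i) (margAlong (prodPM p) (valS d k) v)
            = margAlong μ (oneG k) (fun _ : Fin 1 => ∑ i', v i') := by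
        intro v i
        rw [margAlong, margAlong, push_push]
        have hcomp : (axialRestr (A := A) i ∘ fun (w : (Fin d → Fin n) → A)
              (t : {v // v ∈ axialSet d k}) => w (cycAdd v (valS d k t)))
            = fun w j => w ((fun j' : Fin k => cycAdd v (axialPoint k i j')) j) := rfl
        rw [hcomp]
        have hinj1 : Function.Injective fun j' : Fin k => cycAdd v (axialPoint k i j') := by
          intro j j' h
          dsimp only at h
          rw [hax v i j, hax v i j'] at h
          have h2 := congrFun h i
          simp only [if_pos rfl] at h2
          exact hcastinj j j' (add_left_cancel h2)
        have hinj2 : Function.Injective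
            fun j : Fin k => cycAdd (fun _ : Fin 1 => ∑ i', v i') (oneG k j) := by
          intro j j' h
          dsimp only at h
          rw [hone _ j, hone _ j'] at h
          have h2 := congrFun h 0
          exact hcastinj j j' (add_left_cancel h2)
        rw [push_prodPM p _ hinj1]
        conv_rhs => rw [hμeq]
        rw [show (fun (w : (Fin 1 → Fin n) → A) (t : Fin k) => w (cycAdd (fun _ : Fin 1 => ∑ i', v i') (oneG k t)))
          = fun w t => w ((fun j : Fin k => cycAdd (fun _ : Fin 1 => ∑ i', v i') (oneG k j)) t) from rfl]
        rw [push_prodPM _ _ hinj2]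
        congr 1
        funext j
        rw [hsite _, hone _ j]
        rw [hp]
        show q (∑ i', (cycAdd v (axialPoint k i j)) i') = q ((∑ i', v i') + (((j : Fin k) : ℕ) : Fin n))
        rw [hax v i j]
        rw [hsax v i j]
      have hνmem : prodPM p ∈ PbarG (valS d k) (axialProdS d Γ) n := by
        refine ⟨isProduct_prodPM p, ?_⟩
        intro i
        show push (axialRestr i) (avgMarg (prodPM p) (valS d k)) ∈ Γ
        rw [avgMarg, push_avgPM]
        rw [show (fun v => push (axialRestr i) (margAlong (prodPM p) (valS d k) v))
          = fun v => margAlong μ (oneG k) ((fun v' : Fin d → Fin n => (fun _ : Fin 1 => ∑ i', v' i')) v)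
          from funext fun v => hstep v i]
        have hfib2 : ∀ u u' : Fin 1 → Fin n,
            (Finset.univ.filter fun v : Fin d → Fin n => (fun _ : Fin 1 => ∑ i', v i') = u).card
            = (Finset.univ.filter fun v : Fin d → Fin n => (fun _ : Fin 1 => ∑ i', v i') = u').card := by
          have heq : ∀ u : Fin 1 → Fin n,
              (Finset.univ.filter fun v : Fin d → Fin n => (fun _ : Fin 1 => ∑ i', v i') = u)
              = Finset.univ.filter fun v : Fin d → Fin n => (∑ i', v i') = u 0 := by
            intro u
            refine Finset.filter_congr ?_
            intro v _
            constructor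
            · intro h; exact congrFun h 0
            · intro h
              funext i'
              have h0 : i' = (0 : Fin 1) := by
                apply Fin.ext
                have := i'.isLt
                omega
              rw [h0]; exact h
          intro u u'
          rw [heq u, heq u']
          exact fiber_card hd (u 0) (u' 0)
        rw [avg_comp (fun v' : Fin d → Fin n => (fun _ : Fin 1 => ∑ i', v' i')) hfib2
          (fun u => margAlong μ (oneG k) u)]
        exact hmarg
      have hentν : entropy (prodPM p) * (n:ℝ) = (n:ℝ)^d * entropy μ := by
        have h1 : entropy (prodPM p) = ∑ v : Fin d → Fin n, entropy (p v) := entropy_prodPM p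
        have h2 : entropy μ = ∑ m : Fin n, entropy (q m) := by
          conv_lhs => rw [hμeq]
          rw [entropy_prodPM]
          rw [Finset.sum_congr rfl fun u (_ : u ∈ Finset.univ) => congrArg entropy (hsite u)]
          exact Fintype.sum_equiv (Equiv.funUnique (Fin 1) (Fin n))
            (fun u => entropy (q (u 0))) (fun m => entropy (q m)) (fun u => rfl)
        have h3 := sum_comp_card (fun v : Fin d → Fin n => ∑ i, v i) hfib
          (fun m => entropy (q m))
        rw [Fintype.card_fin] at h3
        rw [show Fintype.card (Fin d → Fin n) = n ^ d by simp [Fintype.card_fun]] at h3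
        rw [h1, h2]
        calc (∑ v : Fin d → Fin n, entropy (p v)) * (n:ℝ)
            = (∑ v : Fin d → Fin n, entropy (q (∑ i, v i))) * ((n:ℕ):ℝ) := by norm_num; exact Or.inl rfl
          _ = ((n ^ d : ℕ) : ℝ) * ∑ m, entropy (q m) := h3
          _ = (n:ℝ)^d * ∑ m, entropy (q m) := by push_cast; ring
      have hval : entropy μ / (n:ℝ)^1 = entropy (prodPM p) / (n:ℝ)^d := by
        rw [pow_one, div_eq_div_iff (ne_of_gt hnpos) (ne_of_gt (pow_pos hnpos d))]
        linarith
      show entropy μ / (n:ℝ)^1 ≤ _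
      rw [hval]
      exact le_csSup hbdd ⟨_, hνmem, rfl⟩
  unfold hindG
  refine Filter.limsup_le_limsup ?_ ?_ ?_
  · exact Filter.eventually_atTop.mpr ⟨max k 1, key⟩
  · exact Filter.isCoboundedUnder_le_of_le Filter.atTop hann
  · exact ⟨C, Filter.eventually_map.mpr (Filter.eventually_atTop.mpr ⟨1, hbub⟩)⟩


end SCS
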